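/- arXiv:1605.05807 — 2 statements merged into one kernel-verified Lean document; each statement's English description precedes it below -/
import Mathlib

section
/- Let T = ⟨P, 𝒢, O⟩ be a plan-recognition theory with O pairwise distinct, and let P' be the transformed domain with cost c(o_a) = c(a) for each new action. If π' is a plan for G' = G ∪ F_o in P', then the action sequence π obtained from π' by replacing every occurrence of a new action o_a by the original action a is a plan for G in P that satisfies the observation sequence O, and c(π) = c(π'). -/
/-!
Forgetting the marker fluents and replacing each `o_a` by `a` maps every execution of `P'` to an
execution of `P` through the same `F`-parts of the states, with the same cost. The marker of the
`j`-th observation is added only by the corresponding new action, so the goal `F_o` forces every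
new action to occur in `π'`; and the new action of observation `j + 1` requires the marker of
observation `j`, so each of its occurrences is preceded by one of the new action of observation
`j`. Hence the first occurrences of the new actions appear in the order of `O`.
-/

/-- A STRIPS planning domain: fluents `F`, actions `A`, an initial state `I`,
and precondition/add/delete lists for each action.  A planning problem is
obtained by pairing a domain with a goal `G : Set F`. -/
structure Strips (F A : Type) where
  I : Set F
  pre : A → Set F
  add : A → Set F
  del : A → Set F

namespace Strips

variable {F A : Type}

/-- The result of applying action `a` in state `s`: `(s \ Del(a)) ∪ Add(a)`. -/
def applyA (P : Strips F A) (s : Set F) (a : A) : Set F := (s \ P.del a) ∪ P.add a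

/-- `Exec P s π t`: the action sequence `π` is applicable successively from
state `s` (each action's precondition holds when it is applied) and leads to
the state `t`. -/
inductive Exec (P : Strips F A) : Set F → List A → Set F → Prop
  | nil (s : Set F) : Exec P s [] s
  | cons {s t : Set F} {a : A} {π : List A} :
      P.pre a ⊆ s → Exec P (P.applyA s a) π t → Exec P s (a :: π) t

/-- `π` is a plan for the goal `G` in the domain `P`: it is applicable
successively from the initial state and its final state contains `G`. -/
def IsPlan (P : Strips F A) (G : Set F) (π : List A) : Prop :=
  ∃ t, Exec P P.I π t ∧ G ⊆ t

/-- The cost of a plan: the sum of the costs of its actions. -/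
def planCost (c : A → ℝ) (π : List A) : ℝ := (π.map c).sum

/-- An optimal plan for `G`: a plan for `G` of minimum cost among all plans for `G`. -/
def IsOptimalPlan (P : Strips F A) (c : A → ℝ) (G : Set F) (π : List A) : Prop :=
  P.IsPlan G π ∧ ∀ π', P.IsPlan G π' → planCost c π ≤ planCost c π'

/-- `c*_P(G)`: the optimal (minimum) cost of achieving `G` in `P`. -/
noncomputable def cstar (P : Strips F A) (c : A → ℝ) (G : Set F) : ℝ :=
  sInf (planCost c '' {π | P.IsPlan G π})

/-- An action sequence `π` satisfies the observation sequence `O` iff there is a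
strictly monotonic function `f` from observation indices into action indices
such that the `f j`-th action of `π` equals the `j`-th observation. -/
def Satisfies (π O : List A) : Prop :=
  ∃ f : Fin O.length → Fin π.length, StrictMono f ∧ ∀ j, π.get (f j) = O.get j

end Strips

/-- The transformed domain `P'` of a plan-recognition theory `⟨P, 𝒢, O⟩`:
fluents `F' = F ⊕ Fin m` (the fluent `Sum.inr j` is `p_{o_j}`), actions
`A' = A ⊕ Fin m` (the action `Sum.inr j` is the new action `o_{o_j}`),
initial state `I' = I`.  The new action `o_{o_j}` has the same precondition,
add and delete lists as the observed action `o_j = O.get j`, except that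
`p_{o_j}` is added to its add list and `p_{o_{j-1}}` (for the observation
immediately preceding `o_j` in `O`, if any, i.e. when `j > 0`) is added to its
precondition. -/
def Strips.transform (P : Strips F A) (O : List A) :
    Strips (F ⊕ Fin O.length) (A ⊕ Fin O.length) where
  I := Sum.inl '' P.I
  pre := fun x => match x with
    | Sum.inl a => Sum.inl '' P.pre a
    | Sum.inr j => Sum.inl '' P.pre (O.get j) ∪
        {p | ∃ _ : 0 < (j : ℕ), p = Sum.inr
          (⟨(j : ℕ) - 1, Nat.lt_of_le_of_lt (Nat.sub_le _ _) j.isLt⟩ : Fin O.length)}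
  add := fun x => match x with
    | Sum.inl a => Sum.inl '' P.add a
    | Sum.inr j => insert (Sum.inr j) (Sum.inl '' P.add (O.get j))
  del := fun x => match x with
    | Sum.inl a => Sum.inl '' P.del a
    | Sum.inr j => Sum.inl '' P.del (O.get j)

/-- The set `F_o` of new fluents `p_a`, `a ∈ O`, of the transformed domain. -/
def obsFluents {F : Type} (O : List A) : Set (F ⊕ Fin O.length) := Set.range Sum.inr

/-- The transformed goal `G' = G ∪ F_o`. -/
def goalTransform {F : Type} (O : List A) (G : Set F) : Set (F ⊕ Fin O.length) :=
  Sum.inl '' G ∪ Set.range Sum.inr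

/-- The cost function of the transformed domain: `c(o_a) = c(a)`. -/
def costTransform (c : A → ℝ) (O : List A) : A ⊕ Fin O.length → ℝ :=
  Sum.elim c (fun j => c (O.get j))

theorem Fin.strictMono_of_lt_add_one {m : ℕ} {α : Type*} [Preorder α] {f : Fin m → α}
    (h : ∀ (i : Fin m) (hi : (i : ℕ) + 1 < m), f i < f ⟨i + 1, hi⟩) : StrictMono f := by
  cases m with
  | zero => exact fun i => i.elim0
  | succ n => exact Fin.strictMono_iff_lt_succ.2 fun i => h i.castSucc (by simp)

/-- `f j` is the position of the first occurrence of `v j` in `l`. -/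
theorem List.exists_strictMono_get_eq {α : Type*} {m : ℕ} {l : List α} (v : Fin m → α)
    (hmem : ∀ j, v j ∈ l)
    (hprec : ∀ (i : Fin m) (hi : (i : ℕ) + 1 < m) (l₁ l₂ : List α),
      l = l₁ ++ v ⟨i + 1, hi⟩ :: l₂ → v i ∈ l₁) :
    ∃ f : Fin m → Fin l.length, StrictMono f ∧ ∀ j, l.get (f j) = v j := by
  classical
  have hlt (j : Fin m) : l.idxOf (v j) < l.length := List.idxOf_lt_length_of_mem (hmem j)
  refine ⟨fun j => ⟨l.idxOf (v j), hlt j⟩, Fin.strictMono_of_lt_add_one fun i hi => ?_,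
    fun j => List.getElem_idxOf (hlt j)⟩
  obtain ⟨l₁, l₂, hl, hfirst⟩ := List.eq_append_cons_of_mem (hmem ⟨i + 1, hi⟩)
  have hi₁ := hprec i hi l₁ l₂ hl
  rw [Fin.mk_lt_mk, hl, List.idxOf_append_of_mem hi₁, List.idxOf_append_of_notMem hfirst,
    List.idxOf_cons_self, Nat.add_zero]
  exact List.idxOf_lt_length_of_mem hi₁

namespace Strips

variable {F A F' A' : Type} {P : Strips F A}

theorem Exec.of_append {s t : Set F} {l₁ l₂ : List A} (h : Exec P s (l₁ ++ l₂) t) :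
    ∃ u, Exec P s l₁ u ∧ Exec P u l₂ t := by
  induction l₁ generalizing s with
  | nil => exact ⟨s, .nil s, h⟩
  | cons a l₁ ih =>
    obtain _ | ⟨hpre, hrest⟩ := h
    obtain ⟨u, hl₁, hl₂⟩ := ih hrest
    exact ⟨u, .cons hpre hl₁, hl₂⟩

theorem Exec.pre_subset {s t : Set F} {a : A} {l : List A} (h : Exec P s (a :: l) t) :
    P.pre a ⊆ s := by
  obtain _ | ⟨hpre, -⟩ := h
  exact hpre

theorem Exec.mem_or_exists_mem_add {s t : Set F} {π : List A} (h : Exec P s π t) {p : F}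
    (hp : p ∈ t) : p ∈ s ∨ ∃ a ∈ π, p ∈ P.add a := by
  induction h with
  | nil => exact .inl hp
  | @cons s t a π _ _ ih =>
    rcases ih hp with (⟨hs, -⟩ | hadd) | ⟨b, hb, hadd⟩
    · exact .inl hs
    · exact .inr ⟨a, List.mem_cons_self, hadd⟩
    · exact .inr ⟨b, List.mem_cons_of_mem a hb, hadd⟩

theorem Exec.comap {Q : Strips F' A'} (φ : F → F') (ψ : A' → A)
    (hpre : ∀ x, P.pre (ψ x) ⊆ φ ⁻¹' Q.pre x) (hadd : ∀ x, φ ⁻¹' Q.add x = P.add (ψ x))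
    (hdel : ∀ x, φ ⁻¹' Q.del x = P.del (ψ x)) {s t : Set F'} {π : List A'}
    (h : Exec Q s π t) : Exec P (φ ⁻¹' s) (π.map ψ) (φ ⁻¹' t) := by
  induction h with
  | nil s => exact .nil _
  | @cons s t x π hpre' _ ih =>
    refine .cons ((hpre x).trans (Set.preimage_mono hpre')) ?_
    rwa [applyA, Set.preimage_union, Set.preimage_sdiff, hadd, hdel] at ih

theorem planCost_map (c : A → ℝ) (g : A' → A) (π : List A') :
    planCost c (π.map g) = planCost (c ∘ g) π := by
  simp only [planCost, List.map_map]

def transformProj (O : List A) : A ⊕ Fin O.length → A :=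
  Sum.elim id fun j => O.get j

section Transform

variable (O : List A)

theorem preimage_inl_transform_pre (x : A ⊕ Fin O.length) :
    Sum.inl ⁻¹' (P.transform O).pre x = P.pre (transformProj O x) := by
  cases x <;> ext <;> simp [transform, transformProj]

theorem preimage_inl_transform_add (x : A ⊕ Fin O.length) :
    Sum.inl ⁻¹' (P.transform O).add x = P.add (transformProj O x) := by
  cases x <;> ext <;> simp [transform, transformProj]

theorem preimage_inl_transform_del (x : A ⊕ Fin O.length) :
    Sum.inl ⁻¹' (P.transform O).del x = P.del (transformProj O x) := by
  cases x <;> ext <;> simp [transform, transformProj]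

theorem inr_notMem_transform_I (j : Fin O.length) : Sum.inr j ∉ (P.transform O).I := by
  simp [transform]

theorem inr_mem_transform_add_iff (j : Fin O.length) (x : A ⊕ Fin O.length) :
    Sum.inr j ∈ (P.transform O).add x ↔ x = Sum.inr j := by
  cases x <;> simp [transform, eq_comm]

theorem inr_mem_transform_pre_inr_succ (i : Fin O.length) (hi : (i : ℕ) + 1 < O.length) :
    Sum.inr i ∈ (P.transform O).pre (Sum.inr ⟨i + 1, hi⟩) :=
  .inr ⟨Nat.succ_pos _, by simp⟩

variable {O}

theorem Exec.map_transformProj {s t : Set (F ⊕ Fin O.length)} {π' : List (A ⊕ Fin O.length)}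
    (h : Exec (P.transform O) s π' t) :
    Exec P (Sum.inl ⁻¹' s) (π'.map (transformProj O)) (Sum.inl ⁻¹' t) :=
  h.comap Sum.inl (transformProj O) (fun x => (preimage_inl_transform_pre O x).ge)
    (preimage_inl_transform_add O) (preimage_inl_transform_del O)

/-- The marker `p_j` can only have been produced by the new action `o_j`. -/
theorem Exec.inr_mem_of_inr_mem_transform {t : Set (F ⊕ Fin O.length)}
    {π' : List (A ⊕ Fin O.length)} (h : Exec (P.transform O) (P.transform O).I π' t)
    {j : Fin O.length} (hj : Sum.inr j ∈ t) : Sum.inr j ∈ π' := by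
  rcases h.mem_or_exists_mem_add hj with hI | ⟨x, hx, hadd⟩
  · exact absurd hI (inr_notMem_transform_I O j)
  · rwa [(inr_mem_transform_add_iff O j x).1 hadd] at hx

/-- `o_{i+1}` needs the marker `p_i`, which only `o_i` produces. -/
theorem Exec.inr_mem_of_append_inr_succ {t : Set (F ⊕ Fin O.length)}
    {l₁ l₂ : List (A ⊕ Fin O.length)} {i : Fin O.length} {hi : (i : ℕ) + 1 < O.length}
    (h : Exec (P.transform O) (P.transform O).I (l₁ ++ Sum.inr ⟨i + 1, hi⟩ :: l₂) t) :
    Sum.inr i ∈ l₁ := by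
  obtain ⟨u, hl₁, hrest⟩ := h.of_append
  exact hl₁.inr_mem_of_inr_mem_transform
    (hrest.pre_subset (inr_mem_transform_pre_inr_succ O i hi))

variable {G : Set F} {π' : List (A ⊕ Fin O.length)}

theorem IsPlan.of_transform (h : (P.transform O).IsPlan (goalTransform O G) π') :
    P.IsPlan G (π'.map (transformProj O)) := by
  obtain ⟨t, hexec, hgoal⟩ := h
  refine ⟨Sum.inl ⁻¹' t, ?_, fun f hf => hgoal (.inl ⟨f, hf, rfl⟩)⟩
  simpa [transform, Set.preimage_image_eq _ Sum.inl_injective] using hexec.map_transformProj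

theorem IsPlan.satisfies_of_transform (h : (P.transform O).IsPlan (goalTransform O G) π') :
    Satisfies (π'.map (transformProj O)) O := by
  obtain ⟨t, hexec, hgoal⟩ := h
  obtain ⟨f, hf, hget⟩ := List.exists_strictMono_get_eq (l := π') Sum.inr
    (fun j => hexec.inr_mem_of_inr_mem_transform (hgoal (.inr ⟨j, rfl⟩)))
    (fun i hi l₁ l₂ hl => (hl ▸ hexec).inr_mem_of_append_inr_succ)
  refine ⟨fun j => Fin.cast (List.length_map _).symm (f j), fun _ _ hij => hf hij, fun j => ?_⟩
  simp only [List.get_eq_getElem, List.getElem_map, Fin.val_cast] at hget ⊢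
  rw [hget]
  rfl

theorem planCost_map_transformProj (c : A → ℝ) (π' : List (A ⊕ Fin O.length)) :
    planCost c (π'.map (transformProj O)) = planCost (costTransform c O) π' := by
  rw [planCost_map, transformProj, Sum.comp_elim]
  rfl

end Transform

end Strips

theorem transformed_plan_projects_to_satisfying_plan_general
    {F A : Type}
    (P : Strips F A) (O : List A)
    (c : A → ℝ)
    (G : Set F)
    (π' : List (A ⊕ Fin O.length))
    (hπ' : (P.transform O).IsPlan (goalTransform O G) π')
    (π : List A) (hπ : π = π'.map (Sum.elim id (fun j => O.get j))) :
    P.IsPlan G π ∧ Strips.Satisfies π O ∧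
      Strips.planCost c π = Strips.planCost (costTransform c O) π' := by
  subst hπ
  exact ⟨hπ'.of_transform, hπ'.satisfies_of_transform,
    Strips.planCost_map_transformProj c π'⟩

/-- let `T = ⟨P, 𝒢, O⟩` be a plan-recognition theory with `O`
pairwise distinct, and `P' = P.transform O` the transformed domain with cost
`c(o_a) = c(a)` (i.e. `costTransform c O`).  If `π'` is a plan for
`G' = G ∪ F_o` in `P'`, then the sequence `π` obtained from `π'` by replacing
every occurrence of a new action `o_a` by the original action `a` is a plan
for `G` in `P` that satisfies the observation sequence `O`, and
`c(π) = c(π')`. -/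
theorem transformed_plan_projects_to_satisfying_plan
    {F A : Type} [Finite F] [Finite A]
    (P : Strips F A) (𝒢 : Set (Set F)) (O : List A) (hO : O.Nodup)
    (c : A → ℝ) (hc : ∀ a, 0 ≤ c a)
    (G : Set F) (hG : G ∈ 𝒢)
    (π' : List (A ⊕ Fin O.length))
    (hπ' : (P.transform O).IsPlan (goalTransform O G) π')
    (π : List A) (hπ : π = π'.map (Sum.elim id (fun j => O.get j))) :
    P.IsPlan G π ∧ Strips.Satisfies π O ∧
      Strips.planCost c π = Strips.planCost (costTransform c O) π' :=
  transformed_plan_projects_to_satisfying_plan_general P O c G π' hπ' π hπ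
end

section
/- Let T = ⟨P, 𝒢, O⟩ be a plan-recognition theory with O pairwise distinct, P' the transformed domain with c(o_a) = c(a), and G ∈ 𝒢. Then G belongs to the optimal goal set 𝒢*_T if and only if there is an action sequence π' that is both an optimal plan for G in P' and an optimal plan for G' = G ∪ F_o in P', i.e., π' ∈ Π*_{P'}(G) ∩ Π*_{P'}(G'). -/
/-!
Replacing each new action `o_j` of `P' = P.transform O` by the observed action `O[j]` maps
plans of `P'` for `G` to plans of `P` for `G` of the same cost, and every plan of `P` is a plan
of `P'`, so an action sequence of `P'` is an optimal plan for `G` iff its image in `P` is.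
The fluent `p_j` is added only by `o_j`, which requires `p_{j-1}`; hence a plan of `P'` for
`G' = G ∪ F_o` executes `o_0, …, o_{m-1}` in this order and its image in `P` satisfies `O`.
Conversely, if `π` satisfies `O`, replacing the occurrences of `O` in `π` by the `o_j` gives a
plan of `P'` for `G'`, which is optimal for `G'` since it is already optimal for `G ⊆ G'`.
-/

open List

namespace Strips

variable {F A : Type}

theorem satisfies_iff_sublist {π O : List A} : Satisfies π O ↔ O <+ π := by
  rw [sublist_iff_exists_fin_orderEmbedding_get_eq]
  constructor
  · rintro ⟨f, hf, hget⟩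
    exact ⟨OrderEmbedding.ofStrictMono f hf, fun j => (hget j).symm⟩
  · rintro ⟨f, hget⟩
    exact ⟨f, f.strictMono, fun j => (hget j).symm⟩

theorem IsPlan.of_superset {P : Strips F A} {G G' : Set F} {π : List A}
    (h : P.IsPlan G' π) (hG : G ⊆ G') : P.IsPlan G π :=
  let ⟨t, hexec, hG't⟩ := h
  ⟨t, hexec, hG.trans hG't⟩

theorem IsOptimalPlan.of_isPlan_of_subset {P : Strips F A} {c : A → ℝ} {G G' : Set F}
    {π : List A} (h : P.IsOptimalPlan c G π) (hG : G ⊆ G') (hπ : P.IsPlan G' π) :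
    P.IsOptimalPlan c G' π :=
  ⟨hπ, fun ρ hρ => h.2 ρ (hρ.of_superset hG)⟩

section Transform

variable (P : Strips F A) (O : List A)

def baseAction : A ⊕ Fin O.length → A := Sum.elim id O.get

theorem planCost_costTransform (c : A → ℝ) (π' : List (A ⊕ Fin O.length)) :
    planCost (costTransform c O) π' = planCost c (π'.map (baseAction O)) := by
  have : costTransform c O = c ∘ baseAction O := by
    funext x
    cases x <;> rfl
  rw [planCost, planCost, this, map_map]

/-- The state of `P.transform O` with original fluents `s` after the first `k` observation
actions have been executed. -/
def obsState (k : ℕ) (s : Set F) : Set (F ⊕ Fin O.length) :=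
  Sum.inl '' s ∪ Sum.inr '' {i | (i : ℕ) < k}

variable {O}

@[simp]
theorem inl_mem_obsState {k : ℕ} {s : Set F} {p : F} :
    Sum.inl p ∈ obsState O k s ↔ p ∈ s := by
  simp [obsState]

@[simp]
theorem inr_mem_obsState {k : ℕ} {s : Set F} {i : Fin O.length} :
    Sum.inr i ∈ obsState O k s ↔ (i : ℕ) < k := by
  simp [obsState]

theorem obsState_zero (s : Set F) : obsState O 0 s = Sum.inl '' s := by
  simp [obsState]

theorem obsState_of_length_le {k : ℕ} (hk : O.length ≤ k) (s : Set F) :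
    obsState O k s = obsState O O.length s := by
  ext (p | i)
  · simp
  · simp only [inr_mem_obsState, i.isLt, iff_true]
    omega

theorem inl_mem_transform_applyA {s' : Set (F ⊕ Fin O.length)} {x : A ⊕ Fin O.length} {p : F} :
    Sum.inl p ∈ (P.transform O).applyA s' x ↔
      Sum.inl p ∈ s' ∧ p ∉ P.del (baseAction O x) ∨ p ∈ P.add (baseAction O x) := by
  cases x <;> simp [applyA, transform, baseAction]

theorem inr_mem_transform_applyA {s' : Set (F ⊕ Fin O.length)} {x : A ⊕ Fin O.length}
    {i : Fin O.length} :
    Sum.inr i ∈ (P.transform O).applyA s' x ↔ Sum.inr i ∈ s' ∨ x = Sum.inr i := by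
  cases x <;> simp [applyA, transform, eq_comm, or_comm]

theorem image_inl_pre_subset_transform_pre (x : A ⊕ Fin O.length) :
    Sum.inl '' P.pre (baseAction O x) ⊆ (P.transform O).pre x := by
  cases x
  · exact subset_rfl
  · exact Set.subset_union_left

theorem preimage_inl_transform_applyA (s' : Set (F ⊕ Fin O.length)) (x : A ⊕ Fin O.length) :
    Sum.inl ⁻¹' (P.transform O).applyA s' x = P.applyA (Sum.inl ⁻¹' s') (baseAction O x) := by
  ext p
  exact inl_mem_transform_applyA P

theorem inr_pred_mem_of_transform_pre_subset {s' : Set (F ⊕ Fin O.length)} {j : Fin O.length}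
    (hpre : (P.transform O).pre (Sum.inr j) ⊆ s') (hj : 0 < (j : ℕ)) :
    Sum.inr ⟨j - 1, by omega⟩ ∈ s' :=
  hpre (Or.inr ⟨hj, rfl⟩)

variable {P}

theorem Exec.map_baseAction {s' t' : Set (F ⊕ Fin O.length)} {π' : List (A ⊕ Fin O.length)}
    (h : (P.transform O).Exec s' π' t') :
    P.Exec (Sum.inl ⁻¹' s') (π'.map (baseAction O)) (Sum.inl ⁻¹' t') := by
  induction h with
  | nil => exact .nil _
  | cons hpre _ ih =>
    refine .cons (Set.image_subset_iff.1 ((image_inl_pre_subset_transform_pre P _).trans hpre)) ?_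
    rwa [← preimage_inl_transform_applyA]

theorem Exec.obsState_cons_inl {k : ℕ} {s : Set F} {a : A} {π' : List (A ⊕ Fin O.length)}
    {t' : Set (F ⊕ Fin O.length)} (hpre : P.pre a ⊆ s)
    (h : (P.transform O).Exec (obsState O k (P.applyA s a)) π' t') :
    (P.transform O).Exec (obsState O k s) (Sum.inl a :: π') t' := by
  refine .cons (Set.image_mono hpre |>.trans Set.subset_union_left) ?_
  convert h using 1
  ext (p | i)
  · rw [inl_mem_transform_applyA]
    simp [baseAction, applyA]
  · rw [inr_mem_transform_applyA]
    simp

theorem Exec.obsState_cons_inr {s : Set F} {j : Fin O.length} {π' : List (A ⊕ Fin O.length)}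
    {t' : Set (F ⊕ Fin O.length)} (hpre : P.pre (O.get j) ⊆ s)
    (h : (P.transform O).Exec (obsState O (j + 1) (P.applyA s (O.get j))) π' t') :
    (P.transform O).Exec (obsState O j s) (Sum.inr j :: π') t' := by
  refine .cons (Set.union_subset (Set.image_mono hpre |>.trans Set.subset_union_left) ?_) ?_
  · rintro _ ⟨hj, rfl⟩
    simp only [inr_mem_obsState]
    omega
  · convert h using 1
    ext (p | i)
    · rw [inl_mem_transform_applyA]
      simp [baseAction, applyA]
    · simp only [inr_mem_transform_applyA, inr_mem_obsState, Sum.inr.injEq]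
      omega

theorem Exec.map_inl {s t : Set F} {π : List A} (h : P.Exec s π t) (k : ℕ) :
    (P.transform O).Exec (obsState O k s) (π.map Sum.inl) (obsState O k t) := by
  induction h with
  | nil => exact .nil _
  | cons hpre _ ih => exact ih.obsState_cons_inl hpre

theorem Exec.exists_transform_of_drop_sublist {s t : Set F} {π : List A} (h : P.Exec s π t)
    (k : ℕ) (hk : O.drop k <+ π) :
    ∃ π' : List (A ⊕ Fin O.length), π'.map (baseAction O) = π ∧
      (P.transform O).Exec (obsState O k s) π' (obsState O O.length t) := by
  induction h generalizing k with
  | nil s =>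
    refine ⟨[], rfl, ?_⟩
    rw [obsState_of_length_le (drop_eq_nil_iff.1 (sublist_nil.1 hk))]
    exact .nil _
  | cons hpre _ ih =>
    rcases sublist_cons_iff.1 hk with hk | ⟨r, hdrop, hr⟩
    · obtain ⟨π', rfl, hexec⟩ := ih k hk
      exact ⟨_, rfl, hexec.obsState_cons_inl hpre⟩
    · have hlt : k < O.length := by
        by_contra! hle
        simp [drop_eq_nil_iff.2 hle] at hdrop
      rw [drop_eq_getElem_cons hlt, cons.injEq] at hdrop
      obtain ⟨rfl, rfl⟩ := hdrop
      obtain ⟨π', rfl, hexec⟩ := ih (k + 1) hr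
      exact ⟨Sum.inr ⟨k, hlt⟩ :: π', rfl, hexec.obsState_cons_inr (j := ⟨k, hlt⟩) hpre⟩

theorem Exec.drop_sublist_map_baseAction {s' t' : Set (F ⊕ Fin O.length)}
    {π' : List (A ⊕ Fin O.length)} (h : (P.transform O).Exec s' π' t') (k : ℕ)
    (hs : ∀ i : Fin O.length, Sum.inr i ∈ s' → (i : ℕ) < k)
    (ht : ∀ i : Fin O.length, k ≤ i → Sum.inr i ∈ t') :
    O.drop k <+ π'.map (baseAction O) := by
  induction h generalizing k with
  | nil s =>
    have hle : O.length ≤ k := by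
      by_contra! hlt
      exact lt_irrefl k (hs _ (ht ⟨k, hlt⟩ le_rfl))
    simp [drop_eq_nil_iff.2 hle]
  | @cons s t x π hpre _ ih =>
    have hx : ∀ j : Fin O.length, x = Sum.inr j → (j : ℕ) ≤ k := by
      rintro j rfl
      rcases Nat.eq_zero_or_pos j with hj | hj
      · omega
      · have := hs _ (inr_pred_mem_of_transform_pre_subset P hpre hj)
        simp only at this
        omega
    by_cases hxk : ∃ hlt : k < O.length, x = Sum.inr ⟨k, hlt⟩
    · obtain ⟨hlt, rfl⟩ := hxk
      rw [drop_eq_getElem_cons hlt]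
      refine (ih (k + 1) ?_ fun i hi => ht i (by omega)).cons_cons _
      intro i hi
      rcases (inr_mem_transform_applyA P).1 hi with hi | hi
      · exact (hs i hi).trans (Nat.lt_succ_self k)
      · cases hi
        exact Nat.lt_succ_self k
    · refine (ih k ?_ ht).cons _
      intro i hi
      rcases (inr_mem_transform_applyA P).1 hi with hi | rfl
      · exact hs i hi
      · refine lt_of_le_of_ne (hx i rfl) fun hik => hxk ⟨hik ▸ i.isLt, ?_⟩
        simp [← hik]

variable {G : Set F}

theorem IsPlan.map_baseAction {π' : List (A ⊕ Fin O.length)}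
    (h : (P.transform O).IsPlan (Sum.inl '' G) π') : P.IsPlan G (π'.map (baseAction O)) := by
  obtain ⟨t', hexec, hGt'⟩ := h
  refine ⟨Sum.inl ⁻¹' t', ?_, Set.image_subset_iff.1 hGt'⟩
  simpa [transform, Set.preimage_image_eq _ Sum.inl_injective] using hexec.map_baseAction

theorem IsPlan.map_inl {π : List A} (h : P.IsPlan G π) :
    (P.transform O).IsPlan (Sum.inl '' G) (π.map Sum.inl) := by
  obtain ⟨t, hexec, hGt⟩ := h
  refine ⟨Sum.inl '' t, ?_, Set.image_mono hGt⟩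
  simpa [transform, obsState_zero] using hexec.map_inl (O := O) 0

theorem IsPlan.exists_transform_of_sublist {π : List A} (h : P.IsPlan G π) (hO : O <+ π) :
    ∃ π' : List (A ⊕ Fin O.length), π'.map (baseAction O) = π ∧
      (P.transform O).IsPlan (goalTransform O G) π' := by
  obtain ⟨t, hexec, hGt⟩ := h
  obtain ⟨π', hπ', hexec'⟩ := hexec.exists_transform_of_drop_sublist 0 hO
  refine ⟨π', hπ', obsState O O.length t, ?_, ?_⟩
  · simpa [transform, obsState_zero] using hexec'
  · rintro (p | i) hp
    · simpa using hGt (by simpa [goalTransform] using hp)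
    · simp

theorem IsPlan.sublist_map_baseAction {π' : List (A ⊕ Fin O.length)}
    (h : (P.transform O).IsPlan (goalTransform O G) π') : O <+ π'.map (baseAction O) := by
  obtain ⟨t', hexec, hGt'⟩ := h
  simpa using hexec.drop_sublist_map_baseAction 0 (by simp [transform])
    fun i _ => hGt' (Or.inr ⟨i, rfl⟩)

theorem isOptimalPlan_transform_iff {c : A → ℝ} {π' : List (A ⊕ Fin O.length)}
    (h : (P.transform O).IsPlan (Sum.inl '' G) π') :
    (P.transform O).IsOptimalPlan (costTransform c O) (Sum.inl '' G) π' ↔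
      P.IsOptimalPlan c G (π'.map (baseAction O)) := by
  simp only [IsOptimalPlan, planCost_costTransform, h, h.map_baseAction, true_and]
  refine ⟨fun hopt ρ hρ => ?_, fun hopt ρ' hρ' => hopt _ hρ'.map_baseAction⟩
  simpa [baseAction] using hopt _ hρ.map_inl

end Transform

end Strips

theorem goal_in_optimal_set_iff_common_optimal_plan_general
    {F A : Type}
    (P : Strips F A) (O : List A)
    (c : A → ℝ)
    (G : Set F) :
    (∃ π, P.IsOptimalPlan c G π ∧ Strips.Satisfies π O) ↔
      (∃ π' : List (A ⊕ Fin O.length),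
        (P.transform O).IsOptimalPlan (costTransform c O) (Sum.inl '' G) π' ∧
        (P.transform O).IsOptimalPlan (costTransform c O) (goalTransform O G) π') := by
  have hG : Sum.inl '' G ⊆ goalTransform O G := Set.subset_union_left
  constructor
  · rintro ⟨π, hopt, hsat⟩
    obtain ⟨π', rfl, hplan⟩ :=
      hopt.1.exists_transform_of_sublist (Strips.satisfies_iff_sublist.1 hsat)
    have hopt' := (Strips.isOptimalPlan_transform_iff (hplan.of_superset hG)).2 hopt
    exact ⟨π', hopt', hopt'.of_isPlan_of_subset hG hplan⟩
  · rintro ⟨π', hopt, hopt'⟩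
    exact ⟨_, (Strips.isOptimalPlan_transform_iff hopt.1).1 hopt,
      Strips.satisfies_iff_sublist.2 hopt'.1.sublist_map_baseAction⟩

/-- Theorem 1: let `T = ⟨P, 𝒢, O⟩` be a plan-recognition theory
with `O` pairwise distinct, `P' = P.transform O` the transformed domain with
cost `c(o_a) = c(a)`, and `G ∈ 𝒢`.  Then `G` belongs to the optimal goal set
`𝒢*_T` (i.e. some optimal plan for `G` in `P` satisfies `O`) iff there is an
action sequence `π'` that is both an optimal plan for `G` in `P'` and an
optimal plan for `G' = G ∪ F_o` in `P'`, i.e.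
`π' ∈ Π*_{P'}(G) ∩ Π*_{P'}(G')`. -/
theorem goal_in_optimal_set_iff_common_optimal_plan
    {F A : Type} [Finite F] [Finite A]
    (P : Strips F A) (𝒢 : Set (Set F)) (O : List A) (hO : O.Nodup)
    (c : A → ℝ) (hc : ∀ a, 0 ≤ c a)
    (G : Set F) (hG : G ∈ 𝒢) :
    (∃ π, P.IsOptimalPlan c G π ∧ Strips.Satisfies π O) ↔
      (∃ π' : List (A ⊕ Fin O.length),
        (P.transform O).IsOptimalPlan (costTransform c O) (Sum.inl '' G) π' ∧
        (P.transform O).IsOptimalPlan (costTransform c O) (goalTransform O G) π') :=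
  goal_in_optimal_set_iff_common_optimal_plan_general P O c G
end
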